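/- arXiv:2109.07530 — 2 statements merged into one kernel-verified Lean document; each statement's English description precedes it below -/
import Mathlib

section
/- Let N > 1, κ ∈ {−1, 0, 1}, K = κ(N−1), λ ∈ (0,1], and L > 0, with L < π in the case κ = 1. Then for every ε > 0 there exists v̄ > 0, depending only on N, λ, L, ε, such that for every D ∈ [λL, L] and every a ∈ (0, D), if v := v_{K,N,D}(a) < v̄ then |a / (k_D v)^{1/N} − 1| ≤ ε; i.e. the inverse a_{K,N,D}(v) of the volume map satisfies a_{K,N,D}(v) = k_D^{1/N} v^{1/N} (1 + o(1)) as v → 0⁺, uniformly in D ∈ [λL, L]. -/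
open MeasureTheory Filter Set

/-- The function `s_κ`. -/
noncomputable def sK (κ θ : ℝ) : ℝ :=
  if 0 < κ then Real.sin (Real.sqrt κ * θ) / Real.sqrt κ
  else if κ = 0 then θ
  else Real.sinh (Real.sqrt (-κ) * θ) / Real.sqrt (-κ)

/-- `k_D = ∫₀^D s_κ(t)^(N-1) dt`. -/
noncomputable def kD (κ N D : ℝ) : ℝ := ∫ t in (0:ℝ)..D, sK κ t ^ (N - 1)

/-- The function `f_{K,N,D}` (with `K = κ(N-1)`). -/
noncomputable def fKND (κ N D x : ℝ) : ℝ :=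
  ((∫ y in (0:ℝ)..x, (sK κ (D - y) / sK κ (D - x)) ^ (N - 1)) +
    ∫ y in x..D, (sK κ y / sK κ x) ^ (N - 1))⁻¹

/-- The model density `h^a_{K,N,D}` (with `K = κ(N-1)`). -/
noncomputable def hKND (κ N D a x : ℝ) : ℝ :=
  if x ≤ a then fKND κ N D a * (sK κ (D - x) / sK κ (D - a)) ^ (N - 1)
  else fKND κ N D a * (sK κ x / sK κ a) ^ (N - 1)

/-- The volume map `v_{K,N,D}(a) = ∫₀^a h^a_{K,N,D}`. -/
noncomputable def vKND (κ N D a : ℝ) : ℝ := ∫ x in (0:ℝ)..a, hKND κ N D a x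

/-- `ω_N = π^(N/2)/Γ(N/2+1)`. -/
noncomputable def omegaN (N : ℝ) : ℝ := Real.pi ^ (N / 2) / Real.Gamma (N / 2 + 1)

/-- `Vol_{K,N}(r) = N ω_N ∫₀^r s_κ(t)^(N-1) dt` (with `K = κ(N-1)`). -/
noncomputable def VolKN (κ N r : ℝ) : ℝ := N * omegaN N * ∫ t in (0:ℝ)..r, sK κ t ^ (N - 1)

/-- The coefficient `σ^{(s)}_{K,N-1}(θ)`, valued in `[0,∞]`. -/
noncomputable def sigmaE (K N s θ : ℝ) : ENNReal :=
  if (N - 1) * Real.pi ^ 2 ≤ K * θ ^ 2 then ⊤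
  else ENNReal.ofReal (sK (K / (N - 1)) (s * θ) / sK (K / (N - 1)) θ)

/-- A nonnegative continuous function `h` on the interval `I` is an `MCP(K,N)` density. -/
def IsMCPDensity (K N : ℝ) (I : Set ℝ) (h : ℝ → ℝ) : Prop :=
  ContinuousOn h I ∧ (∀ x ∈ I, 0 ≤ h x) ∧
    ∀ x₀ ∈ I, ∀ x₁ ∈ I, ∀ t ∈ Set.Icc (0:ℝ) 1,
      sigmaE K N (1 - t) |x₁ - x₀| ^ (N - 1) * ENNReal.ofReal (h x₀) ≤
        ENNReal.ofReal (h (t * x₁ + (1 - t) * x₀))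

/-- The measure `h·𝓛¹` restricted to `[0,D]`. -/
noncomputable def mcMeasure (D : ℝ) (h : ℝ → ℝ) : Measure ℝ :=
  (volume.restrict (Set.Icc 0 D)).withDensity fun x => ENNReal.ofReal (h x)

/-- The outer Minkowski content `μ⁺(E) = liminf_{ρ→0⁺} (μ(E^ρ) - μ(E))/ρ`. -/
noncomputable def minkContent (μ : Measure ℝ) (E : Set ℝ) : ℝ :=
  Filter.liminf (fun ρ : ℝ => ((μ (Metric.thickening ρ E)).toReal - (μ E).toReal) / ρ)
    (nhdsWithin 0 (Set.Ioi 0))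

/-!
Write `A` and `B` for the two integrals in `f_{K,N,D}(a)`, so that `v = A / (A + B)` and
`B = (k_D - k_a) / s(a)^(N-1)`. Then
`a^N / (k_D v) = a^N / k_D + (1 - k_a / k_D) / ((s(a) / a)^(N-1) · A / a)`.
As `a → 0` the first term and `k_a / k_D` vanish because `k_D ≥ k_{λL} > 0`, `s(a) / a → s'(0) = 1`,
and `A / a → 1` uniformly in `D`, since `s` is Lipschitz and `s(D - a)` stays away from `0`.
Conversely, the linear bounds `c₁ t ≤ s t ≤ c₂ t` on `[0, L]` bound `v` below once `a` is, so
`v → 0` forces `a → 0` uniformly in `D`. The argument works for any profile `s` that is `C¹`,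
vanishes at `0` with derivative `1` and is positive on `(0, L]` (`IsModelProfile`); for
`κ ∈ {-1, 0, 1}`, `s_κ` is `sinh`, `id` or `sin`.
-/

open Topology

lemma sub_mul_le_integral {f : ℝ → ℝ} {a b c : ℝ} (hab : a ≤ b)
    (hf : IntervalIntegrable f volume a b) (h : ∀ x ∈ Icc a b, c ≤ f x) :
    (b - a) * c ≤ ∫ x in a..b, f x := by
  simpa using intervalIntegral.integral_mono_on hab intervalIntegrable_const hf h

lemma integral_le_sub_mul {f : ℝ → ℝ} {a b c : ℝ} (hab : a ≤ b)
    (hf : IntervalIntegrable f volume a b) (h : ∀ x ∈ Icc a b, f x ≤ c) :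
    ∫ x in a..b, f x ≤ (b - a) * c := by
  simpa using intervalIntegral.integral_mono_on hab hf intervalIntegrable_const h

structure IsModelProfile (s : ℝ → ℝ) (L : ℝ) : Prop where
  contDiff : ContDiff ℝ 1 s
  map_zero : s 0 = 0
  hasDerivAt_zero : HasDerivAt s 1 0
  pos : ∀ t ∈ Ioc 0 L, 0 < s t

-- `kMass`, `innerMass + outerMass` and `modelVol` are `k_x`, `1 / f_{K,N,D}(a)` and
-- `v_{K,N,D}(a)` with a general profile `s` in place of `s_κ`.
noncomputable def kMass (s : ℝ → ℝ) (N x : ℝ) : ℝ := ∫ t in (0:ℝ)..x, s t ^ (N - 1)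

noncomputable def innerMass (s : ℝ → ℝ) (N D a : ℝ) : ℝ :=
  ∫ y in (0:ℝ)..a, (s (D - y) / s (D - a)) ^ (N - 1)

noncomputable def outerMass (s : ℝ → ℝ) (N D a : ℝ) : ℝ := ∫ y in a..D, (s y / s a) ^ (N - 1)

noncomputable def modelVol (s : ℝ → ℝ) (N D a : ℝ) : ℝ :=
  innerMass s N D a / (innerMass s N D a + outerMass s N D a)

lemma vKND_eq_modelVol {κ N D a : ℝ} (ha : 0 ≤ a) :
    vKND κ N D a = modelVol (sK κ) N D a := by
  have h : EqOn (hKND κ N D a)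
      (fun x => fKND κ N D a * (sK κ (D - x) / sK κ (D - a)) ^ (N - 1)) (uIcc 0 a) := by
    intro x hx
    rw [uIcc_of_le ha] at hx
    simp only [hKND, if_pos hx.2]
  rw [vKND, intervalIntegral.integral_congr h, intervalIntegral.integral_const_mul, fKND,
    modelVol, innerMass, outerMass, div_eq_inv_mul]

def admissiblePairs (l L : ℝ) : Set (ℝ × ℝ) := {q | q.1 ∈ Icc l L ∧ q.2 ∈ Ioo 0 q.1}

def smallPairs (l L : ℝ) : Filter (ℝ × ℝ) := comap Prod.snd (𝓝 0) ⊓ 𝓟 (admissiblePairs l L)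

lemma eventually_mem_admissiblePairs (l L : ℝ) :
    ∀ᶠ q in smallPairs l L, q ∈ admissiblePairs l L :=
  mem_inf_of_right (mem_principal_self _)

lemma tendsto_snd_smallPairs (l L : ℝ) : Tendsto Prod.snd (smallPairs l L) (𝓝[>] 0) :=
  tendsto_nhdsWithin_iff.2 ⟨tendsto_comap.mono_left inf_le_left,
    (eventually_mem_admissiblePairs l L).mono fun _ hq => hq.2.1⟩

namespace IsModelProfile

variable {s : ℝ → ℝ} {l L N : ℝ}

lemma continuous (hs : IsModelProfile s L) : Continuous s := hs.contDiff.continuous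

lemma nonneg (hs : IsModelProfile s L) {t : ℝ} (ht : t ∈ Icc 0 L) : 0 ≤ s t := by
  rcases ht.1.eq_or_lt with rfl | ht0
  · exact hs.map_zero.ge
  · exact (hs.pos t ⟨ht0, ht.2⟩).le

lemma continuous_rpow (hs : IsModelProfile s L) (hN : 1 ≤ N) :
    Continuous fun t => s t ^ (N - 1) :=
  hs.continuous.rpow_const fun _ => Or.inr (by linarith)

lemma exists_lipschitz (hs : IsModelProfile s L) :
    ∃ M : ℝ, 0 ≤ M ∧ ∀ x ∈ Icc 0 L, ∀ y ∈ Icc 0 L, |s x - s y| ≤ M * |x - y| := by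
  obtain ⟨M, hM⟩ := hs.contDiff.locallyLipschitz.locallyLipschitzOn
    |>.exists_lipschitzOnWith_of_compact (isCompact_Icc (a := (0:ℝ)) (b := L))
  exact ⟨M, M.2, fun x hx y hy => by simpa [Real.dist_eq] using hM.dist_le_mul x hx y hy⟩

/-- `t ↦ s t / t`, extended by `1` at `0`, is continuous and positive on `[0, L]`. -/
lemma exists_linear_bounds (hs : IsModelProfile s L) (hL : 0 ≤ L) :
    ∃ c₁ c₂ : ℝ, 0 < c₁ ∧ 0 < c₂ ∧ ∀ t ∈ Icc 0 L, c₁ * t ≤ s t ∧ s t ≤ c₂ * t := by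
  set τ := dslope s 0
  have hτ : Continuous τ := continuousOn_univ.1 <| (continuousOn_dslope univ_mem).2
    ⟨hs.continuous.continuousOn, hs.hasDerivAt_zero.differentiableAt⟩
  have hτpos : ∀ t ∈ Icc 0 L, 0 < τ t := by
    rintro t ⟨ht0, htL⟩
    rcases ht0.eq_or_lt with rfl | ht0
    · simp [τ, dslope_same, hs.hasDerivAt_zero.deriv]
    · have : τ t = s t / t := by simp [τ, dslope_of_ne _ ht0.ne', slope_def_field, hs.map_zero]
      exact this ▸ div_pos (hs.pos t ⟨ht0, htL⟩) ht0
  have hst : ∀ t, s t = t * τ t := fun t => by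
    simpa [hs.map_zero] using (sub_smul_dslope s 0 t).symm
  obtain ⟨t₁, ht₁, hmin⟩ := isCompact_Icc.exists_isMinOn (nonempty_Icc.2 hL) hτ.continuousOn
  obtain ⟨t₂, ht₂, hmax⟩ := isCompact_Icc.exists_isMaxOn (nonempty_Icc.2 hL) hτ.continuousOn
  refine ⟨τ t₁, τ t₂, hτpos t₁ ht₁, hτpos t₂ ht₂, fun t ht => ?_⟩
  rw [hst t, mul_comm _ t, mul_comm _ t]
  exact ⟨mul_le_mul_of_nonneg_left (hmin ht) ht.1, mul_le_mul_of_nonneg_left (hmax ht) ht.1⟩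

lemma tendsto_div_self (hs : IsModelProfile s L) :
    Tendsto (fun t => s t / t) (𝓝[>] 0) (𝓝 1) := by
  simpa [hs.map_zero, div_eq_inv_mul] using hs.hasDerivAt_zero.tendsto_slope_zero_right

lemma kMass_pos (hs : IsModelProfile s L) (hN : 1 ≤ N) {x : ℝ} (hx : 0 < x) (hxL : x ≤ L) :
    0 < kMass s N x :=
  intervalIntegral.intervalIntegral_pos_of_pos_on ((hs.continuous_rpow hN).intervalIntegrable _ _)
    (fun t ht => Real.rpow_pos_of_pos (hs.pos t ⟨ht.1, ht.2.le.trans hxL⟩) _) hx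

lemma kMass_sub_kMass (hs : IsModelProfile s L) (hN : 1 ≤ N) (x y : ℝ) :
    kMass s N y - kMass s N x = ∫ t in x..y, s t ^ (N - 1) :=
  intervalIntegral.integral_interval_sub_left ((hs.continuous_rpow hN).intervalIntegrable _ _)
    ((hs.continuous_rpow hN).intervalIntegrable _ _)

lemma kMass_le_kMass (hs : IsModelProfile s L) (hN : 1 ≤ N) {x y : ℝ} (hx : 0 ≤ x) (hxy : x ≤ y)
    (hy : y ≤ L) : kMass s N x ≤ kMass s N y := by
  have := intervalIntegral.integral_nonneg (μ := volume) hxy fun t ht =>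
    Real.rpow_nonneg (hs.nonneg ⟨hx.trans ht.1, ht.2.trans hy⟩) (N - 1)
  linarith [hs.kMass_sub_kMass hN x y]

lemma tendsto_kMass (hs : IsModelProfile s L) (hN : 1 ≤ N) :
    Tendsto (kMass s N) (𝓝 0) (𝓝 0) :=
  (intervalIntegral.continuous_primitive
    (fun _ _ => (hs.continuous_rpow hN).intervalIntegrable _ _) 0).tendsto' 0 0 (by simp)

lemma outerMass_eq (hs : IsModelProfile s L) (hN : 1 ≤ N) {D a : ℝ} (ha : 0 ≤ a) (haD : a ≤ D)
    (hD : D ≤ L) : outerMass s N D a = (kMass s N D - kMass s N a) / s a ^ (N - 1) := by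
  have h : EqOn (fun y => (s y / s a) ^ (N - 1)) (fun y => s y ^ (N - 1) / s a ^ (N - 1))
      (uIcc a D) := by
    intro y hy
    rw [uIcc_of_le haD] at hy
    exact Real.div_rpow (hs.nonneg ⟨ha.trans hy.1, hy.2.trans hD⟩)
      (hs.nonneg ⟨ha, haD.trans hD⟩) _
  rw [outerMass, intervalIntegral.integral_congr h, intervalIntegral.integral_div,
    hs.kMass_sub_kMass hN]

lemma outerMass_nonneg (hs : IsModelProfile s L) (hN : 1 ≤ N) {D a : ℝ} (ha : 0 < a)
    (haD : a ≤ D) (hD : D ≤ L) : 0 ≤ outerMass s N D a := by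
  rw [hs.outerMass_eq hN ha.le haD hD]
  exact div_nonneg (sub_nonneg.2 (hs.kMass_le_kMass hN ha.le haD hD))
    (Real.rpow_nonneg (hs.nonneg ⟨ha.le, haD.trans hD⟩) _)

lemma continuous_innerMass_integrand (hs : IsModelProfile s L) (hN : 1 ≤ N) (D a : ℝ) :
    Continuous fun y => (s (D - y) / s (D - a)) ^ (N - 1) :=
  ((hs.continuous.comp (continuous_sub_left D)).div_const _).rpow_const
    fun _ => Or.inr (by linarith)

lemma innerMass_pos (hs : IsModelProfile s L) (hN : 1 ≤ N) {D a : ℝ} (ha : 0 < a) (haD : a < D)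
    (hD : D ≤ L) : 0 < innerMass s N D a :=
  intervalIntegral.intervalIntegral_pos_of_pos_on
    ((hs.continuous_innerMass_integrand hN D a).intervalIntegrable _ _)
    (fun y hy => Real.rpow_pos_of_pos (div_pos (hs.pos _ ⟨by linarith [hy.2], by linarith [hy.1]⟩)
      (hs.pos _ ⟨by linarith, by linarith⟩)) _) ha

lemma modelVol_pos (hs : IsModelProfile s L) (hN : 1 ≤ N) {D a : ℝ} (ha : 0 < a) (haD : a < D)
    (hD : D ≤ L) : 0 < modelVol s N D a := by
  have hA := hs.innerMass_pos hN ha haD hD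
  exact div_pos hA (add_pos_of_pos_of_nonneg hA (hs.outerMass_nonneg hN ha haD.le hD))

lemma rpow_div_kMass_mul_modelVol (hs : IsModelProfile s L) (hN : 1 ≤ N) {D a : ℝ} (ha : 0 < a)
    (haD : a < D) (hD : D ≤ L) :
    a ^ N / (kMass s N D * modelVol s N D a) = a ^ N / kMass s N D +
      (1 - kMass s N a / kMass s N D) / ((s a / a) ^ (N - 1) * (innerMass s N D a / a)) := by
  have hA := hs.innerMass_pos hN ha haD hD
  have hk := hs.kMass_pos hN (ha.trans haD) hD
  rw [modelVol, hs.outerMass_eq hN ha.le haD.le hD,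
    Real.div_rpow (hs.nonneg ⟨ha.le, haD.le.trans hD⟩) ha.le, Real.rpow_sub_one ha.ne' N]
  field_simp

lemma innerMass_mem_Icc (hs : IsModelProfile s L) (hN : 1 ≤ N) {M c D a : ℝ} (hM₀ : 0 ≤ M)
    (hM : ∀ x ∈ Icc 0 L, ∀ y ∈ Icc 0 L, |s x - s y| ≤ M * |x - y|) (hc : 0 < c)
    (ha : 0 < a) (haD : a < D) (hD : D ≤ L) (hcs : c ≤ s (D - a)) (hMa : M * a / c ≤ 1) :
    innerMass s N D a ∈ Icc (a * (1 - M * a / c) ^ (N - 1)) (a * (1 + M * a / c) ^ (N - 1)) := by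
  have hratio : ∀ y ∈ Icc 0 a, |s (D - y) / s (D - a) - 1| ≤ M * a / c := by
    intro y hy
    have hsDa : 0 < s (D - a) := hc.trans_le hcs
    rw [div_sub_one hsDa.ne', abs_div, abs_of_pos hsDa]
    refine div_le_div₀ (by positivity) ?_ hc hcs
    calc |s (D - y) - s (D - a)| ≤ M * |D - y - (D - a)| :=
          hM _ ⟨by linarith [hy.2], by linarith [hy.1]⟩ _ ⟨by linarith, by linarith⟩
      _ ≤ M * a := by
          rw [show D - y - (D - a) = a - y by ring, abs_of_nonneg (by linarith [hy.2])]
          exact mul_le_mul_of_nonneg_left (by linarith [hy.1]) hM₀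
  have hint := (hs.continuous_innerMass_integrand hN D a).intervalIntegrable (μ := volume) 0 a
  have hN' : 0 ≤ N - 1 := by linarith
  have hdev : 0 ≤ M * a / c := div_nonneg (mul_nonneg hM₀ ha.le) hc.le
  constructor
  · simpa [innerMass] using sub_mul_le_integral ha.le hint fun y hy =>
      Real.rpow_le_rpow (by linarith) (by linarith [(abs_le.1 (hratio y hy)).1]) hN'
  · simpa [innerMass] using integral_le_sub_mul ha.le hint fun y hy =>
      Real.rpow_le_rpow (by linarith [(abs_le.1 (hratio y hy)).1])
        (by linarith [(abs_le.1 (hratio y hy)).2]) hN'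

lemma tendsto_innerMass_div (hs : IsModelProfile s L) (hN : 1 ≤ N) (hl : 0 < l) (hlL : l ≤ L) :
    Tendsto (fun q : ℝ × ℝ => innerMass s N q.1 q.2 / q.2) (smallPairs l L) (𝓝 1) := by
  obtain ⟨M, hM₀, hM⟩ := hs.exists_lipschitz
  obtain ⟨c₁, _, hc₁, -, hc⟩ := hs.exists_linear_bounds (hl.le.trans hlL)
  set c := c₁ * (l / 2)
  have hc0 : 0 < c := by positivity
  have hsnd : Tendsto (fun q : ℝ × ℝ => q.2) (smallPairs l L) (𝓝 0) :=
    (tendsto_snd_smallPairs l L).mono_right nhdsWithin_le_nhds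
  have hdev : Tendsto (fun q : ℝ × ℝ => M * q.2 / c) (smallPairs l L) (𝓝 0) := by
    simpa using (hsnd.const_mul M).div_const c
  have hN' : 0 ≤ N - 1 := by linarith
  have hlow : Tendsto (fun q : ℝ × ℝ => (1 - M * q.2 / c) ^ (N - 1)) (smallPairs l L) (𝓝 1) := by
    simpa using ((tendsto_const_nhds (x := (1:ℝ))).sub hdev).rpow_const (Or.inr hN')
  have hupp : Tendsto (fun q : ℝ × ℝ => (1 + M * q.2 / c) ^ (N - 1)) (smallPairs l L) (𝓝 1) := by
    simpa using ((tendsto_const_nhds (x := (1:ℝ))).add hdev).rpow_const (Or.inr hN')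
  have hbounds : ∀ᶠ q in smallPairs l L, innerMass s N q.1 q.2 / q.2 ∈
      Icc ((1 - M * q.2 / c) ^ (N - 1)) ((1 + M * q.2 / c) ^ (N - 1)) := by
    filter_upwards [eventually_mem_admissiblePairs l L, hsnd.eventually (ge_mem_nhds (half_pos hl)),
      hdev.eventually (ge_mem_nhds one_pos)] with q ⟨⟨hlD, hDL⟩, ha, haD⟩ hal hMa
    have hcs : c ≤ s (q.1 - q.2) :=
      le_trans (mul_le_mul_of_nonneg_left (by linarith) hc₁.le)
        (hc _ ⟨by linarith, by linarith⟩).1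
    obtain ⟨h₁, h₂⟩ := hs.innerMass_mem_Icc hN hM₀ hM hc0 ha haD hDL hcs hMa
    exact ⟨(le_div_iff₀ ha).2 (by linarith), (div_le_iff₀ ha).2 (by linarith)⟩
  exact tendsto_of_tendsto_of_tendsto_of_le_of_le' hlow hupp
    (hbounds.mono fun _ h => h.1) (hbounds.mono fun _ h => h.2)

lemma tendsto_rpow_div_kMass_mul_modelVol (hs : IsModelProfile s L) (hN : 1 ≤ N) (hl : 0 < l)
    (hlL : l ≤ L) :
    Tendsto (fun q : ℝ × ℝ => q.2 ^ N / (kMass s N q.1 * modelVol s N q.1 q.2))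
      (smallPairs l L) (𝓝 1) := by
  have hS := eventually_mem_admissiblePairs l L
  have hsnd := tendsto_snd_smallPairs l L
  have hk₀ := hs.kMass_pos hN hl hlL
  have hbdd : IsBoundedUnder (· ≤ ·) (smallPairs l L) fun q => ‖(kMass s N q.1)⁻¹‖ :=
    isBoundedUnder_of_eventually_le (a := (kMass s N l)⁻¹) <| hS.mono fun q hq => by
      have hk := hs.kMass_le_kMass hN hl.le hq.1.1 hq.1.2
      rw [norm_inv, Real.norm_of_nonneg (hk₀.trans_le hk).le]
      exact inv_anti₀ hk₀ hk
  have hpow : Tendsto (fun q : ℝ × ℝ => q.2 ^ N) (smallPairs l L) (𝓝 0) := by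
    simpa [Real.zero_rpow (by linarith : N ≠ 0)] using
      (hsnd.mono_right nhdsWithin_le_nhds).rpow_const (p := N) (Or.inr (by linarith))
  have hslope : Tendsto (fun q : ℝ × ℝ => (s q.2 / q.2) ^ (N - 1)) (smallPairs l L) (𝓝 1) := by
    simpa using (hs.tendsto_div_self.comp hsnd).rpow_const (p := N - 1) (Or.inr (by linarith))
  have hkMass : Tendsto (fun q : ℝ × ℝ => kMass s N q.2) (smallPairs l L) (𝓝 0) :=
    (hs.tendsto_kMass hN).comp (hsnd.mono_right nhdsWithin_le_nhds)
  have hlim := (hpow.zero_mul_isBoundedUnder_le hbdd).add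
    ((tendsto_const_nhds (x := (1:ℝ)) |>.sub (hkMass.zero_mul_isBoundedUnder_le hbdd)).div
      (hslope.mul (hs.tendsto_innerMass_div hN hl hlL)) (by norm_num))
  simp only [sub_zero, zero_add, mul_one, div_one] at hlim
  refine hlim.congr' (hS.mono fun q hq => ?_)
  simp only [Pi.div_apply]
  rw [hs.rpow_div_kMass_mul_modelVol hN hq.2.1 hq.2.2 hq.1.2]
  ring

lemma exists_le_modelVol (hs : IsModelProfile s L) (hN : 1 ≤ N) (hL : 0 ≤ L) {δ : ℝ}
    (hδ : 0 < δ) : ∃ vbar > 0, ∀ D ≤ L, ∀ a ∈ Ioo 0 D, δ ≤ a → vbar ≤ modelVol s N D a := by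
  obtain ⟨c₁, c₂, hc₁, hc₂, hc⟩ := hs.exists_linear_bounds hL
  have hN' : 0 ≤ N - 1 := by linarith
  set A₀ := δ * (c₁ / c₂) ^ (N - 1)
  set B₀ := L * (c₂ * L / (c₁ * δ)) ^ (N - 1)
  have hA₀ : 0 < A₀ := by positivity
  have hB₀ : 0 ≤ B₀ := by positivity
  refine ⟨A₀ / (A₀ + B₀), by positivity, fun D hD a ⟨ha, haD⟩ hδa => ?_⟩
  have hA : A₀ ≤ innerMass s N D a := by
    refine le_trans (mul_le_mul_of_nonneg_right hδa (by positivity)) ?_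
    simpa [innerMass] using sub_mul_le_integral ha.le
      ((hs.continuous_innerMass_integrand hN D a).intervalIntegrable _ _) fun y hy => by
        refine Real.rpow_le_rpow (by positivity) ?_ hN'
        have hy₁ := hc (D - y) ⟨by linarith [hy.2], by linarith [hy.1]⟩
        have hy₂ := hc (D - a) ⟨by linarith, by linarith⟩
        rw [div_le_div_iff₀ hc₂ (by nlinarith)]
        have h₁ := mul_le_mul_of_nonneg_left hy₂.2 hc₁.le
        have h₂ := mul_le_mul_of_nonneg_left (by linarith [hy.2] : D - a ≤ D - y)
          (mul_pos hc₁ hc₂).le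
        have h₃ := mul_le_mul_of_nonneg_left hy₁.1 hc₂.le
        linarith
  have hB : outerMass s N D a ≤ B₀ := by
    have hsa : c₁ * δ ≤ s a :=
      (mul_le_mul_of_nonneg_left hδa hc₁.le).trans (hc a ⟨ha.le, by linarith⟩).1
    have hratio : ∀ y ∈ Icc a D, (s y / s a) ^ (N - 1) ≤ (c₂ * L / (c₁ * δ)) ^ (N - 1) := by
      intro y hy
      have hsy := hc y ⟨by linarith [hy.1], by linarith [hy.2]⟩
      refine Real.rpow_le_rpow (div_nonneg ((mul_nonneg hc₁.le (by linarith [hy.1])).trans hsy.1)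
        ((by positivity : (0:ℝ) < c₁ * δ).le.trans hsa)) ?_ hN'
      exact div_le_div₀ (by positivity)
        (hsy.2.trans (mul_le_mul_of_nonneg_left (by linarith [hy.2]) hc₂.le)) (by positivity) hsa
    calc outerMass s N D a ≤ (D - a) * (c₂ * L / (c₁ * δ)) ^ (N - 1) :=
          integral_le_sub_mul haD.le (((hs.continuous.div_const _).rpow_const
            fun _ => Or.inr hN').intervalIntegrable _ _) hratio
      _ ≤ B₀ := mul_le_mul_of_nonneg_right (by linarith) (by positivity)
  have hA' := hs.innerMass_pos hN ha haD hD
  have hB' := hs.outerMass_nonneg hN ha haD.le hD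
  rw [modelVol, div_le_div_iff₀ (by positivity) (by positivity)]
  nlinarith

theorem exists_forall_abs_div_rpow_sub_one_le (hs : IsModelProfile s L) (hN : 1 ≤ N) (hl : 0 < l)
    (hlL : l ≤ L) :
    ∀ ε > 0, ∃ vbar > 0, ∀ D ∈ Icc l L, ∀ a ∈ Ioo 0 D, modelVol s N D a < vbar →
      |a / (kMass s N D * modelVol s N D a) ^ (1 / N) - 1| ≤ ε := by
  intro ε hε
  have hlim : Tendsto (fun q : ℝ × ℝ => q.2 / (kMass s N q.1 * modelVol s N q.1 q.2) ^ (1 / N))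
      (smallPairs l L) (𝓝 1) := by
    have h := (hs.tendsto_rpow_div_kMass_mul_modelVol hN hl hlL).rpow_const
      (p := 1 / N) (Or.inr (by positivity))
    rw [Real.one_rpow] at h
    refine h.congr' ((eventually_mem_admissiblePairs l L).mono fun q ⟨⟨hlD, hDL⟩, ha, haD⟩ => ?_)
    have hkv := mul_pos (hs.kMass_pos hN (hl.trans_le hlD) hDL) (hs.modelVol_pos hN ha haD hDL)
    rw [Real.div_rpow (by positivity) hkv.le, ← Real.rpow_mul ha.le,
      mul_one_div_cancel (by linarith), Real.rpow_one]
  obtain ⟨δ, hδ, hsmall⟩ : ∃ δ > 0, ∀ D ∈ Icc l L, ∀ a ∈ Ioo 0 D, a < δ →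
      |a / (kMass s N D * modelVol s N D a) ^ (1 / N) - 1| ≤ ε := by
    have h := hlim.eventually (Metric.closedBall_mem_nhds 1 hε)
    rw [smallPairs, eventually_inf_principal, eventually_comap, Metric.eventually_nhds_iff] at h
    obtain ⟨δ, hδ, h⟩ := h
    exact ⟨δ, hδ, fun D hD a ha haδ =>
      h (by simpa [abs_of_pos ha.1] using haδ) (D, a) rfl ⟨hD, ha⟩⟩
  obtain ⟨vbar, hvbar, hle⟩ := hs.exists_le_modelVol hN (hl.le.trans hlL) hδ
  refine ⟨vbar, hvbar, fun D hD a ha hv => hsmall D hD a ha ?_⟩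
  by_contra! haδ
  exact (hle D hD.2 a ha haδ).not_gt hv

end IsModelProfile

lemma sK_neg_one : sK (-1) = Real.sinh := by funext t; simp [sK]

lemma sK_zero : sK 0 = id := by funext t; simp [sK]

lemma sK_one : sK 1 = Real.sin := by funext t; simp [sK]

lemma isModelProfile_sinh (L : ℝ) : IsModelProfile Real.sinh L where
  contDiff := Real.contDiff_sinh
  map_zero := Real.sinh_zero
  hasDerivAt_zero := by simpa using Real.hasDerivAt_sinh 0
  pos _ ht := Real.sinh_pos_iff.2 ht.1

lemma isModelProfile_id (L : ℝ) : IsModelProfile id L where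
  contDiff := contDiff_id
  map_zero := rfl
  hasDerivAt_zero := hasDerivAt_id 0
  pos _ ht := ht.1

lemma isModelProfile_sin {L : ℝ} (hL : L < Real.pi) : IsModelProfile Real.sin L where
  contDiff := Real.contDiff_sin
  map_zero := Real.sin_zero
  hasDerivAt_zero := by simpa using Real.hasDerivAt_sin 0
  pos _ ht := Real.sin_pos_of_pos_of_lt_pi ht.1 (ht.2.trans_lt hL)

/-- the inverse of the volume map satisfies
`a_{K,N,D}(v) = k_D^(1/N) v^(1/N) (1+o(1))` as `v → 0⁺`, uniformly in `D ∈ [λL, L]`. -/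
theorem stmt3 (N κ lam L : ℝ) (hN : 1 < N) (hκ : κ = -1 ∨ κ = 0 ∨ κ = 1)
    (hlam : lam ∈ Set.Ioc (0:ℝ) 1) (hL : 0 < L) (hLpi : κ = 1 → L < Real.pi) :
    ∀ ε > 0, ∃ vbar > 0, ∀ D ∈ Set.Icc (lam * L) L, ∀ a ∈ Set.Ioo (0:ℝ) D,
      vKND κ N D a < vbar →
      |a / (kD κ N D * vKND κ N D a) ^ (1 / N) - 1| ≤ ε := by
  have hs : IsModelProfile (sK κ) L := by
    rcases hκ with rfl | rfl | rfl
    · exact sK_neg_one ▸ isModelProfile_sinh L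
    · exact sK_zero ▸ isModelProfile_id L
    · exact sK_one ▸ isModelProfile_sin (hLpi rfl)
  intro ε hε
  obtain ⟨vbar, hvbar, h⟩ := hs.exists_forall_abs_div_rpow_sub_one_le hN.le (mul_pos hlam.1 hL)
    (mul_le_of_le_one_left hL.le hlam.2) ε hε
  refine ⟨vbar, hvbar, fun D hD a ha hv => ?_⟩
  rw [vKND_eq_modelVol ha.1.le] at hv ⊢
  exact h D hD a ha hv
end

section
/- Let N > 1, κ ∈ {−1, 0, 1}, K = κ(N−1), and D > 0, with D < π in the case κ = 1. For a ∈ (0,D) let μ_a = h^a_{K,N,D}·𝓛¹ restricted to [0,D]. Then the outer Minkowski content of the interval [0,a] satisfies μ_a⁺([0,a]) = h^a_{K,N,D}(a) = f_{K,N,D}(a). -/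
open MeasureTheory Filter Set

open Topology in
lemma sK_pos {κ : ℝ} (hκ : κ = -1 ∨ κ = 0 ∨ κ = 1) {x : ℝ}
    (hx : 0 < x) (hxpi : κ = 1 → x < Real.pi) : 0 < sK κ x := by
  rcases hκ with h | h | h <;> subst h <;>
      simp [sK, Real.sqrt_one, show ¬ ((0:ℝ) < -1) by norm_num,
        show ((-1:ℝ) ≠ 0) by norm_num]
  · exact hx
  · exact hx
  · exact Real.sin_pos_of_pos_of_lt_pi hx (hxpi rfl)

lemma sK_cont (κ : ℝ) : Continuous (sK κ) := by
  unfold sK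
  split_ifs <;> fun_prop

open Topology

/-- the outer Minkowski content of `[0,a]` for the measure
`μ_a = h^a_{K,N,D}·𝓛¹` restricted to `[0,D]` equals `h^a_{K,N,D}(a) = f_{K,N,D}(a)`. -/
theorem stmt8 (N κ D : ℝ) (hN : 1 < N) (hκ : κ = -1 ∨ κ = 0 ∨ κ = 1)
    (hD : 0 < D) (hDpi : κ = 1 → D < Real.pi) :
    ∀ a ∈ Set.Ioo (0:ℝ) D,
      minkContent (mcMeasure D (hKND κ N D a)) (Set.Icc 0 a) = hKND κ N D a a ∧
      hKND κ N D a a = fKND κ N D a := by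
  intro a ha
  obtain ⟨ha0, haD⟩ := ha
  have hN1 : (0:ℝ) ≤ N - 1 := by linarith
  have hpi : ∀ x : ℝ, 0 < x → x ≤ D → 0 < sK κ x := fun x hx hxD =>
    sK_pos hκ hx fun h => lt_of_le_of_lt hxD (hDpi h)
  have hsKa : 0 < sK κ a := hpi a ha0 haD.le
  have hsKDa : 0 < sK κ (D - a) := hpi _ (by linarith) (by linarith)
  have hha : hKND κ N D a a = fKND κ N D a := by
    rw [hKND, if_pos le_rfl, div_self hsKDa.ne', Real.one_rpow, mul_one]
  refine ⟨?_, hha⟩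
  -- nonnegativity of fKND
  have hf0 : 0 ≤ fKND κ N D a := by
    rw [fKND]
    apply inv_nonneg.mpr
    apply add_nonneg
    · refine intervalIntegral.integral_nonneg ha0.le fun y hy => ?_
      exact Real.rpow_nonneg
        (div_nonneg (hpi _ (by linarith [hy.2]) (by linarith [hy.1])).le hsKDa.le) _
    · refine intervalIntegral.integral_nonneg haD.le fun y hy => ?_
      exact Real.rpow_nonneg
        (div_nonneg (hpi _ (by linarith [hy.1]) hy.2).le hsKa.le) _
  set h := hKND κ N D a with hh
  -- continuity of h
  have hcont : Continuous h := by
    rw [hh]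
    unfold hKND
    apply Continuous.if_le
    · exact continuous_const.mul
        ((((sK_cont κ).comp (continuous_const.sub continuous_id)).div_const _).rpow_const
          fun _ => Or.inr hN1)
    · exact continuous_const.mul
        (((sK_cont κ).div_const _).rpow_const fun _ => Or.inr hN1)
    · exact continuous_id
    · exact continuous_const
    · intro x hx
      rw [hx, div_self hsKDa.ne', div_self hsKa.ne']
  -- nonnegativity of h on [0,D]
  have hnn : ∀ x ∈ Icc (0:ℝ) D, 0 ≤ h x := by
    intro x hx
    rw [hh]
    unfold hKND
    split_ifs with hxa
    · exact mul_nonneg hf0 (Real.rpow_nonneg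
        (div_nonneg (hpi _ (by linarith) (by linarith [hx.1])).le hsKDa.le) _)
    · push_neg at hxa
      exact mul_nonneg hf0 (Real.rpow_nonneg
        (div_nonneg (hpi _ (by linarith) hx.2).le hsKa.le) _)
  set μ := mcMeasure D h with hμ
  have hmeas_eq : ∀ s : Set ℝ, MeasurableSet s →
      μ s = ∫⁻ x in s ∩ Icc 0 D, ENNReal.ofReal (h x) := by
    intro s hs
    rw [hμ, mcMeasure, withDensity_apply _ hs, Measure.restrict_restrict hs]
  have key : ∀ s : Set ℝ, MeasurableSet s → s ⊆ Icc 0 D →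
      (∫⁻ x in s, ENNReal.ofReal (h x)).toReal = ∫ x in s, h x := by
    intro s hs hsub
    have hint : IntegrableOn h s := (hcont.integrableOn_Icc).mono_set hsub
    have hnns : 0 ≤ᵐ[volume.restrict s] h :=
      (ae_restrict_iff' hs).mpr (ae_of_all _ fun x hx => hnn x (hsub hx))
    rw [← ofReal_integral_eq_lintegral_ofReal hint hnns,
      ENNReal.toReal_ofReal (integral_nonneg_of_ae hnns)]
  -- the thickening of [0,a]
  have hthick : ∀ ρ : ℝ, 0 < ρ →
      Metric.thickening ρ (Icc 0 a) = Ioo (-ρ) (a + ρ) := by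
    intro ρ hρ
    ext x
    simp only [Metric.mem_thickening_iff, mem_Icc, mem_Ioo, Real.dist_eq]
    constructor
    · rintro ⟨y, ⟨hy0, hya⟩, hd⟩
      obtain ⟨h1, h2⟩ := abs_lt.mp hd
      constructor <;> linarith
    · rintro ⟨h1, h2⟩
      rcases le_total x 0 with hx | hx
      · exact ⟨0, ⟨le_rfl, ha0.le⟩, by rw [sub_zero, abs_lt]; constructor <;> linarith⟩
      · rcases le_total x a with hxa | hxa
        · exact ⟨x, ⟨hx, hxa⟩, by rw [sub_self, abs_zero]; exact hρ⟩
        · exact ⟨a, ⟨ha0.le, le_rfl⟩, by rw [abs_lt]; constructor <;> linarith⟩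
  -- the derivative / slope limit
  have hderiv : HasDerivAt (fun u => ∫ x in a..u, h x) (h a) a :=
    intervalIntegral.integral_hasDerivAt_right (hcont.intervalIntegrable _ _)
      (hcont.stronglyMeasurable.stronglyMeasurableAtFilter) hcont.continuousAt
  have hten : Tendsto (fun ρ : ℝ => (∫ x in a..(a + ρ), h x) / ρ) (𝓝[>] 0) (𝓝 (h a)) := by
    have := hderiv.tendsto_slope_zero_right
    simpa [intervalIntegral.integral_same, smul_eq_mul, div_eq_inv_mul] using this
  -- eventual equality of the difference quotient
  have hev : ∀ᶠ ρ in 𝓝[>] (0:ℝ),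
      ((μ (Metric.thickening ρ (Icc 0 a))).toReal - (μ (Icc 0 a)).toReal) / ρ =
        (∫ x in a..(a + ρ), h x) / ρ := by
    filter_upwards [Ioo_mem_nhdsGT_of_mem (by constructor <;> [exact le_rfl; linarith] :
        (0:ℝ) ∈ Ico (0:ℝ) (D - a))] with ρ hρ
    obtain ⟨hρ0, hρD⟩ := hρ
    have haρ : a + ρ ≤ D := by linarith
    have hinter : Ioo (-ρ) (a + ρ) ∩ Icc 0 D = Ico 0 (a + ρ) := by
      ext x
      simp only [mem_inter_iff, mem_Ioo, mem_Icc, mem_Ico]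
      constructor
      · rintro ⟨⟨h1, h2⟩, h3, h4⟩; exact ⟨h3, h2⟩
      · rintro ⟨h3, h2⟩; exact ⟨⟨by linarith, h2⟩, h3, by linarith⟩
    have e1 : (μ (Metric.thickening ρ (Icc 0 a))).toReal = ∫ x in Ico 0 (a + ρ), h x := by
      rw [hthick ρ hρ0, hmeas_eq _ measurableSet_Ioo, hinter]
      exact key _ measurableSet_Ico (Ico_subset_Icc_self.trans (Icc_subset_Icc_right haρ))
    have e2 : (μ (Icc 0 a)).toReal = ∫ x in Icc 0 a, h x := by
      rw [hmeas_eq _ measurableSet_Icc,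
        inter_eq_self_of_subset_left (Icc_subset_Icc_right haD.le)]
      exact key _ measurableSet_Icc (Icc_subset_Icc_right haD.le)
    rw [e1, e2, integral_Ico_eq_integral_Ioo, ← integral_Ioc_eq_integral_Ioo,
      integral_Icc_eq_integral_Ioc,
      ← intervalIntegral.integral_of_le (by linarith : (0:ℝ) ≤ a + ρ),
      ← intervalIntegral.integral_of_le ha0.le,
      ← intervalIntegral.integral_add_adjacent_intervals
        (hcont.intervalIntegrable 0 a) (hcont.intervalIntegrable a (a + ρ))]
    ring
  have htend : Tendsto
      (fun ρ : ℝ => ((μ (Metric.thickening ρ (Icc 0 a))).toReal - (μ (Icc 0 a)).toReal) / ρ)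
      (𝓝[>] 0) (𝓝 (h a)) := hten.congr' (hev.mono fun ρ hρ => hρ.symm)
  rw [minkContent]
  exact htend.liminf_eq
end
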